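/- arXiv:2401.01320 — 3 statements merged into one kernel-verified Lean document; each statement's English description precedes it below -/
import Mathlib

section
/- Let w be a nontrivial reduced word in the free group F_n on basis {x_1, ..., x_n}. If among the letters of w there is exactly one occurrence of x_j or its inverse (for some fixed j), i.e., the total number of occurrences of x_j and x_j^{-1} in w is one, then w is primitive (w is an element of some basis of F_n). -/
/-!
Write `w = u x_j^ε v` with `ε = ±1` and `u`, `v` words avoiding `x_j`. The substitution
`x_j ↦ w` fixes `u` and `v`, and so does `x_j ↦ (u⁻¹ x_j v⁻¹)^ε`; since `ε * ε = 1` these two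
endomorphisms are mutually inverse, so `w` is the image of `x_j` under an automorphism.
-/

/-- A subgroup `F` of a group `G` is a proper free factor if there is a nontrivial
subgroup `K` such that `G` is the internal free product of `F` and `K`. -/
def IsProperFreeFactor {G : Type*} [Group G] (F : Subgroup G) : Prop :=
  ∃ K : Subgroup G, F ≠ ⊥ ∧ K ≠ ⊥ ∧
    Function.Bijective (Monoid.Coprod.lift F.subtype K.subtype)

/-- An element of a group is separable if it lies in a proper free factor. -/
def IsSeparableElt {G : Type*} [Group G] (w : G) : Prop :=
  ∃ F : Subgroup G, IsProperFreeFactor F ∧ w ∈ F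

/-- An element of the free group `F_n` is primitive if some automorphism carries
a standard generator to it, equivalently it belongs to some basis. -/
def IsPrimitiveElt {n : ℕ} (w : FreeGroup (Fin n)) : Prop :=
  ∃ (φ : FreeGroup (Fin n) ≃* FreeGroup (Fin n)) (i : Fin n), φ (FreeGroup.of i) = w

theorem List.exists_eq_append_cons_of_countP_eq_one {α : Type*} {p : α → Bool} {L : List α}
    (h : L.countP p = 1) :
    ∃ A x B, L = A ++ x :: B ∧ p x ∧ (∀ a ∈ A, ¬p a) ∧ ∀ b ∈ B, ¬p b := by
  obtain ⟨x, hxL, hx⟩ := countP_pos_iff.mp (h ▸ Nat.one_pos)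
  obtain ⟨A, B, rfl⟩ := append_of_mem hxL
  have : A.countP p + B.countP p = 0 := by
    rw [countP_append, countP_cons_of_pos hx] at h; omega
  exact ⟨A, x, B, rfl, hx, countP_eq_zero.mp (by omega), countP_eq_zero.mp (by omega)⟩

namespace FreeGroup

open Function

variable {α : Type*}

theorem mk_append_cons_append (A B : List (α × Bool)) (a : α) (b : Bool) :
    mk (A ++ (a, b) :: B) = mk A * of a ^ (if b then 1 else -1 : ℤ) * mk B := by
  rw [← mul_mk, ← List.singleton_append, ← mul_mk, ← mul_assoc]
  cases b <;> simp [of, inv_mk, invRev]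

variable [DecidableEq α]

theorem lift_update_mk_of_forall_ne (a : α) (t : FreeGroup α) {L : List (α × Bool)}
    (hL : ∀ x ∈ L, x.1 ≠ a) : lift (update of a t) (mk L) = mk L := by
  conv_rhs => rw [← lift_of_apply (mk L)]
  rw [lift_mk, lift_mk]
  congr 1
  exact List.map_congr_left fun x hx => by rw [update_of_ne (hL x hx)]

theorem lift_update_comp_lift_update (a : α) (s t : FreeGroup α) :
    (lift (update of a s)).comp (lift (update of a t)) =
      lift (update of a (lift (update of a s) t)) := by
  refine ext_hom _ _ fun k => ?_
  rcases eq_or_ne k a with rfl | hk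
  · simp
  · simp [update_of_ne hk]

theorem lift_update_of_self (a : α) : lift (update of a (of a)) = MonoidHom.id _ := by
  rw [update_eq_self, lift_of_eq_id]

theorem exists_mulEquiv_apply_of_eq_mk_mul_zpow_mul_mk (a : α) {ε : ℤ} (hε : ε * ε = 1)
    {A B : List (α × Bool)} (hA : ∀ x ∈ A, x.1 ≠ a) (hB : ∀ x ∈ B, x.1 ≠ a) :
    ∃ φ : FreeGroup α ≃* FreeGroup α, φ (of a) = mk A * of a ^ ε * mk B := by
  set t := mk A * of a ^ ε * mk B with ht
  set s := ((mk A)⁻¹ * of a * (mk B)⁻¹) ^ ε with hs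
  have hts : lift (update of a t) s = of a := by
    rw [hs, map_zpow, _root_.map_mul, _root_.map_mul, _root_.map_inv, _root_.map_inv,
      lift_update_mk_of_forall_ne a t hA, lift_update_mk_of_forall_ne a t hB, lift_apply_of,
      update_self]
    simp only [t, mul_assoc, inv_mul_cancel_left, mul_inv_cancel, mul_one, ← zpow_mul, hε,
      zpow_one]
  have hst : lift (update of a s) t = of a := by
    rw [ht, _root_.map_mul, _root_.map_mul, map_zpow, lift_update_mk_of_forall_ne a s hA,
      lift_update_mk_of_forall_ne a s hB, lift_apply_of, update_self]
    simp only [s, ← zpow_mul, hε, zpow_one]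
    group
  refine ⟨MonoidHom.toMulEquiv (lift (update of a t)) (lift (update of a s)) ?_ ?_, ?_⟩
  · rw [lift_update_comp_lift_update, hst, lift_update_of_self]
  · rw [lift_update_comp_lift_update, hts, lift_update_of_self]
  · simp

end FreeGroup

theorem one_letter_implies_primitive_general (n : ℕ) (j : Fin n) (w : FreeGroup (Fin n))
    (hcount : (FreeGroup.toWord w).countP (fun p => p.1 == j) = 1) :
    IsPrimitiveElt w := by
  obtain ⟨A, ⟨k, b⟩, B, hw, hk, hA, hB⟩ := List.exists_eq_append_cons_of_countP_eq_one hcount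
  obtain rfl : k = j := by simpa using hk
  have hε : (if b then 1 else -1 : ℤ) * (if b then 1 else -1) = 1 := by cases b <;> rfl
  obtain ⟨φ, hφ⟩ := FreeGroup.exists_mulEquiv_apply_of_eq_mk_mul_zpow_mul_mk k hε
    (fun x hx => by simpa using hA x hx) (fun x hx => by simpa using hB x hx)
  refine ⟨φ, k, ?_⟩
  rw [hφ, ← FreeGroup.mk_append_cons_append, ← hw, FreeGroup.mk_toWord]

/-- A nontrivial reduced word with exactly one occurrence of the letter
`x_j` or its inverse is primitive. -/
theorem one_letter_implies_primitive (n : ℕ) (j : Fin n) (w : FreeGroup (Fin n))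
    (hw : w ≠ 1)
    (hcount : (FreeGroup.toWord w).countP (fun p => p.1 == j) = 1) :
    IsPrimitiveElt w :=
  one_letter_implies_primitive_general n j w hcount
end

section
/- Let n ≥ 2. Every nontrivial separable element of F_n is a product of two primitive elements of F_n. -/
/-!
Write `F_n = F ∗ K` with `w ∈ F` and `K ≠ 1`, and let `y` be a basis element of `K` (subgroups of
free groups are free). Fixing `F` and the other basis elements of `K` while sending `y ↦ w y⁻¹`
is an automorphism of `F ∗ K`, its inverse sending `y ↦ y⁻¹ w`. Bases of `F` and `K` together
form a basis of `F_n`, so `y` and `w y⁻¹` are primitive, and `w = (w y⁻¹) y`.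
-/

open Monoid.Coprod

namespace FreeGroupBasis

variable {ι κ G H : Type*} [Group G] [Group H]

def coprod (b : FreeGroupBasis ι G) (c : FreeGroupBasis κ H) :
    FreeGroupBasis (ι ⊕ κ) (G ∗ H) :=
  .ofRepr <| MulEquiv.symm <| MonoidHom.toMulEquiv
    (FreeGroup.lift (Sum.elim (inl ∘ b) (inr ∘ c)))
    (Monoid.Coprod.lift (b.lift (FreeGroup.of ∘ Sum.inl)) (c.lift (FreeGroup.of ∘ Sum.inr)))
    (by ext (i | k) <;> simp)
    (by ext1 <;> [apply b.ext_hom; apply c.ext_hom] <;> simp)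

@[simp]
lemma coprod_apply_inr (b : FreeGroupBasis ι G) (c : FreeGroupBasis κ H) (k : κ) :
    b.coprod c (Sum.inr k) = inr (c k) := by
  change FreeGroup.lift (Sum.elim (inl ∘ b) (inr ∘ c)) (.of (.inr k)) = _
  simp

lemma nonempty_of_nontrivial [Nontrivial G] (b : FreeGroupBasis ι G) : Nonempty ι := by
  by_contra h
  rw [not_nonempty_iff] at h
  exact not_subsingleton G b.repr.toEquiv.subsingleton

lemma isPrimitiveElt_apply {n : ℕ} (b : FreeGroupBasis ι (FreeGroup (Fin n))) (i : ι) :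
    IsPrimitiveElt (b i) := by
  let e : Fin n ≃ ι := .ofFreeGroupEquiv b.repr
  exact ⟨(b.reindex e.symm).repr.symm, e.symm i, by
    change b.reindex e.symm (e.symm i) = b i
    simp⟩

end FreeGroupBasis

lemma Monoid.Coprod.exists_mulEquiv_inr_eq {ι G H : Type*} [Group G] [Group H]
    (c : FreeGroupBasis ι H) (i : ι) (w : G) :
    ∃ φ : G ∗ H ≃* G ∗ H, φ (inr (c i)) = inl w * (inr (c i))⁻¹ := by
  classical
  let y : G ∗ H := inr (c i)
  let f := lift inl (c.lift (Function.update (inr ∘ c) i (inl w * y⁻¹)))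
  let g := lift inl (c.lift (Function.update (inr ∘ c) i (y⁻¹ * inl w)))
  suffices g.comp f = .id _ ∧ f.comp g = .id _ from
    ⟨f.toMulEquiv g this.1 this.2, by simp [f, y]⟩
  constructor <;>
  · ext1
    · ext; simp [f, g]
    · apply c.ext_hom
      intro j
      rcases eq_or_ne j i with rfl | hj
      · simp [f, g, y]
      · simp [f, g, hj]

theorem separable_is_product_of_two_primitives_general (n : ℕ)
    (w : FreeGroup (Fin n)) (hsep : IsSeparableElt w) :
    ∃ p q : FreeGroup (Fin n), IsPrimitiveElt p ∧ IsPrimitiveElt q ∧ w = p * q := by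
  obtain ⟨F, ⟨K, -, hK, hbij⟩, hwF⟩ := hsep
  let E := MulEquiv.ofBijective _ hbij
  let b := (IsFreeGroup.basis F).coprod (IsFreeGroup.basis K)
  have : Nontrivial K := K.nontrivial_iff_ne_bot.mpr hK
  obtain ⟨k⟩ := (IsFreeGroup.basis K).nonempty_of_nontrivial
  obtain ⟨φ, hφ⟩ := exists_mulEquiv_inr_eq (IsFreeGroup.basis K) k (⟨w, hwF⟩ : F)
  refine ⟨_, _, (b.map (φ.trans E)).isPrimitiveElt_apply (.inr k),
    (b.map E).isPrimitiveElt_apply (.inr k), ?_⟩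
  simp [b, hφ, E]

/-- Every nontrivial separable element of `F_n` (`n ≥ 2`) is a product of
two primitive elements. -/
theorem separable_is_product_of_two_primitives (n : ℕ) (hn : 2 ≤ n)
    (w : FreeGroup (Fin n)) (hw : w ≠ 1) (hsep : IsSeparableElt w) :
    ∃ p q : FreeGroup (Fin n), IsPrimitiveElt p ∧ IsPrimitiveElt q ∧ w = p * q :=
  separable_is_product_of_two_primitives_general n w hsep
end

section
/- Let n ≥ 2, let C^sep be the set of nontrivial separable elements of F_n and C^prim the set of primitive elements of F_n. Let d_sep and d_prim denote the word metrics on F_n with respect to C^sep and C^prim respectively. Then for all g, h in F_n: d_sep(g,h) ≤ d_prim(g,h) ≤ 2 · d_sep(g,h). In particular the identity map is a quasi-isometry between Cay(F_n, C^sep) and Cay(F_n, C^prim). -/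
/-- Word length of `g` with respect to a subset `S` of a group: the least number
of factors from `S` needed to write `g`. -/
noncomputable def wordLen {G : Type*} [Group G] (S : Set G) (g : G) : ℕ :=
  sInf {k | ∃ l : List G, l.length = k ∧ (∀ a ∈ l, a ∈ S) ∧ l.prod = g}

open Monoid
open scoped Monoid.Coprod

section WordLength

-- `wordLen S g = 0` when `g` is not a product of elements of `S` (`sInf ∅ = 0`),
-- hence the closure hypotheses below.

variable {G : Type*} [Group G] {S T : Set G}

theorem wordLen_le_length {l : List G} (hl : ∀ a ∈ l, a ∈ S) : wordLen S l.prod ≤ l.length :=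
  Nat.sInf_le ⟨l, rfl, hl, rfl⟩

theorem exists_list_length_eq_wordLen {g : G} (hg : g ∈ Submonoid.closure S) :
    ∃ l : List G, l.length = wordLen S g ∧ (∀ a ∈ l, a ∈ S) ∧ l.prod = g := by
  obtain ⟨l, hlS, rfl⟩ := Submonoid.exists_list_of_mem_closure hg
  exact Nat.sInf_mem (s := {k | ∃ m : List G, m.length = k ∧ (∀ a ∈ m, a ∈ S) ∧ m.prod = l.prod})
    ⟨l.length, l, rfl, hlS, rfl⟩

theorem wordLen_mul_le {a b : G} (ha : a ∈ Submonoid.closure S) (hb : b ∈ Submonoid.closure S) :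
    wordLen S (a * b) ≤ wordLen S a + wordLen S b := by
  obtain ⟨l, hl, hlS, rfl⟩ := exists_list_length_eq_wordLen ha
  obtain ⟨m, hm, hmS, rfl⟩ := exists_list_length_eq_wordLen hb
  rw [← hl, ← hm, ← List.prod_append, ← List.length_append]
  exact wordLen_le_length fun a ha => (List.mem_append.1 ha).elim (hlS a) (hmS a)

theorem wordLen_le_mul_wordLen {k : ℕ}
    (hST : ∀ s ∈ S, s ∈ Submonoid.closure T ∧ wordLen T s ≤ k) {g : G}
    (hg : g ∈ Submonoid.closure S) : wordLen T g ≤ k * wordLen S g := by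
  obtain ⟨l, hl, hlS, rfl⟩ := exists_list_length_eq_wordLen hg
  rw [← hl]
  clear hl hg
  induction l with
  | nil => exact wordLen_le_length (l := []) (by simp)
  | cons a l ih =>
    have hlS' : ∀ b ∈ l, b ∈ S := fun b hb => hlS b (List.mem_cons_of_mem a hb)
    obtain ⟨ha, hak⟩ := hST a (hlS a List.mem_cons_self)
    have hl : l.prod ∈ Submonoid.closure T :=
      Submonoid.list_prod_mem _ fun b hb => (hST b (hlS' b hb)).1
    calc wordLen T (a * l.prod) ≤ wordLen T a + wordLen T l.prod := wordLen_mul_le ha hl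
      _ ≤ k + k * l.length := add_le_add hak (ih hlS')
      _ = k * (a :: l).length := by rw [List.length_cons]; ring

theorem wordLen_le_wordLen_of_subset (hST : S ⊆ T) {g : G} (hg : g ∈ Submonoid.closure S) :
    wordLen T g ≤ wordLen S g := by
  have hT : ∀ s ∈ S, s ∈ Submonoid.closure T ∧ wordLen T s ≤ 1 := fun s hs =>
    ⟨Submonoid.subset_closure (hST hs),
      by simpa using wordLen_le_length (l := [s]) (by simpa using hST hs)⟩
  simpa using wordLen_le_mul_wordLen hT hg

end WordLength

namespace FreeGroup

variable {α : Type*}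

def sumMulEquivCoprod (α β : Type*) : FreeGroup (α ⊕ β) ≃* FreeGroup α ∗ FreeGroup β :=
  MonoidHom.toMulEquiv
    (FreeGroup.lift (Sum.elim (Coprod.inl ∘ of) (Coprod.inr ∘ of)))
    (Coprod.lift (map Sum.inl) (map Sum.inr))
    (by ext (a | b) <;> simp)
    (by ext <;> simp)

@[simp]
theorem sumMulEquivCoprod_of_inr {β : Type*} (b : β) :
    sumMulEquivCoprod α β (of (Sum.inr b)) = Coprod.inr (of b) := by
  simp [sumMulEquivCoprod]

@[simp]
theorem sumMulEquivCoprod_symm_inl {β : Type*} (x : FreeGroup α) :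
    (sumMulEquivCoprod α β).symm (Coprod.inl x) = map Sum.inl x := by
  simp [sumMulEquivCoprod]

def invGeneratorsEquiv (α : Type*) : FreeGroup α ≃* FreeGroup α :=
  MonoidHom.toMulEquiv (FreeGroup.lift fun a => (of a)⁻¹) (FreeGroup.lift fun a => (of a)⁻¹)
    (by ext; simp) (by ext; simp)

@[simp]
theorem invGeneratorsEquiv_of (a : α) : invGeneratorsEquiv α (of a) = (of a)⁻¹ := by
  simp [invGeneratorsEquiv]

end FreeGroup

namespace Monoid.Coprod

open FreeGroup

variable {A γ : Type*} [Group A] [DecidableEq γ]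

def transvectionHom (a : A) (t : γ) : A ∗ FreeGroup γ →* A ∗ FreeGroup γ :=
  lift inl (FreeGroup.lift fun s => if s = t then inl a * inr (of s) else inr (of s))

theorem transvectionHom_one (t : γ) : transvectionHom (1 : A) t = MonoidHom.id _ := by
  ext s <;> [rfl; by_cases hs : s = t <;> simp [transvectionHom, hs]]

theorem transvectionHom_comp (a b : A) (t : γ) :
    (transvectionHom a t).comp (transvectionHom b t) = transvectionHom (b * a) t := by
  ext s <;> [rfl; by_cases hs : s = t <;> simp [transvectionHom, hs, mul_assoc]]

def transvection (a : A) (t : γ) : A ∗ FreeGroup γ ≃* A ∗ FreeGroup γ :=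
  MonoidHom.toMulEquiv (transvectionHom a t) (transvectionHom a⁻¹ t)
    (by rw [transvectionHom_comp, mul_inv_cancel, transvectionHom_one])
    (by rw [transvectionHom_comp, inv_mul_cancel, transvectionHom_one])

@[simp]
theorem transvection_inr_of (a : A) (t : γ) :
    transvection a t (inr (of t)) = inl a * inr (of t) := by
  simp [transvection, transvectionHom]

end Monoid.Coprod

open FreeGroup

section Primitive

variable {n : ℕ}

theorem isPrimitiveElt_apply_of {α : Type*} (μ : FreeGroup α ≃* FreeGroup (Fin n)) (a : α) :
    IsPrimitiveElt (μ (of a)) :=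
  let σ : α ≃ Fin n := Equiv.ofFreeGroupEquiv μ
  ⟨(freeGroupCongr σ).symm.trans μ, σ a, by simp⟩

theorem isPrimitiveElt_apply_inr_of {β γ : Type*}
    (μ : FreeGroup β ∗ FreeGroup γ ≃* FreeGroup (Fin n)) (t : γ) :
    IsPrimitiveElt (μ (Coprod.inr (of t))) := by
  simpa using isPrimitiveElt_apply_of ((sumMulEquivCoprod β γ).trans μ) (Sum.inr t)

theorem IsPrimitiveElt.inv {w : FreeGroup (Fin n)} (hw : IsPrimitiveElt w) :
    IsPrimitiveElt w⁻¹ := by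
  obtain ⟨φ, i, rfl⟩ := hw
  simpa using isPrimitiveElt_apply_of ((invGeneratorsEquiv (Fin n)).trans φ) i

theorem IsPrimitiveElt.ne_one {w : FreeGroup (Fin n)} (hw : IsPrimitiveElt w) : w ≠ 1 := by
  obtain ⟨φ, i, rfl⟩ := hw
  exact (MulEquiv.map_ne_one_iff φ).2 (of_ne_one i)

theorem closure_isPrimitiveElt_eq_top :
    Submonoid.closure {w : FreeGroup (Fin n) | IsPrimitiveElt w} = ⊤ := by
  have hgen : Set.range (of (α := Fin n)) ⊆ {w | IsPrimitiveElt w} :=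
    Set.range_subset_iff.2 (isPrimitiveElt_apply_of (MulEquiv.refl _))
  have hgen_inv : (Set.range (of (α := Fin n)))⁻¹ ⊆ {w | IsPrimitiveElt w} := fun w hw => by
    simpa using (hgen hw).inv
  rw [eq_top_iff, ← Subgroup.top_toSubmonoid, ← closure_range_of, Subgroup.closure_toSubmonoid]
  exact Submonoid.closure_mono (Set.union_subset hgen hgen_inv)

end Primitive

section Separable

variable {A B G : Type*} [Group A] [Group B] [Group G]

theorem isProperFreeFactor_range_comp_inl [Nontrivial A] [Nontrivial B] (e : A ∗ B ≃* G) :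
    IsProperFreeFactor (e.toMonoidHom.comp Coprod.inl).range := by
  let f := e.toMonoidHom.comp (Coprod.inl : A →* A ∗ B)
  let g := e.toMonoidHom.comp (Coprod.inr : B →* A ∗ B)
  let eA : A ≃* f.range := MonoidHom.ofInjective (e.injective.comp Coprod.inl_injective)
  let eB : B ≃* g.range := MonoidHom.ofInjective (e.injective.comp Coprod.inr_injective)
  have hlift : (Coprod.lift f.range.subtype g.range.subtype).comp
      (Coprod.map eA eB) = e.toMonoidHom := by
    ext <;> rfl
  refine ⟨g.range, ?_, ?_, ?_⟩
  · exact (Subgroup.nontrivial_iff_ne_bot _).1 eA.symm.toEquiv.nontrivial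
  · exact (Subgroup.nontrivial_iff_ne_bot _).1 eB.symm.toEquiv.nontrivial
  · rw [← Function.Bijective.of_comp_iff _ (MulEquiv.coprodCongr eA eB).bijective,
      MulEquiv.coprodCongr_apply, ← MonoidHom.coe_comp, hlift]
    exact e.bijective

theorem isSeparableElt_apply_inl [Nontrivial A] [Nontrivial B] (e : A ∗ B ≃* G) (a : A) :
    IsSeparableElt (e (Coprod.inl a)) :=
  ⟨_, isProperFreeFactor_range_comp_inl e, a, rfl⟩

theorem isSeparableElt_apply_of {α : Type*} [Nontrivial α] (φ : FreeGroup α ≃* G) (a : α) :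
    IsSeparableElt (φ (of a)) := by
  classical
  let e : α ≃ {x // x = a} ⊕ {x // ¬x = a} := (Equiv.sumCompl (· = a)).symm
  have : Nonempty {x // ¬x = a} := nonempty_subtype.2 (exists_ne a)
  simpa [e] using isSeparableElt_apply_inl
    ((sumMulEquivCoprod _ _).symm.trans ((freeGroupCongr e).symm.trans φ)) (of ⟨a, rfl⟩)

end Separable

section PrimitiveSeparable

variable {n : ℕ}

theorem IsPrimitiveElt.isSeparableElt (hn : 2 ≤ n) {w : FreeGroup (Fin n)}
    (hw : IsPrimitiveElt w) : IsSeparableElt w := by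
  have : Nontrivial (Fin n) := Fin.nontrivial_iff_two_le.2 hn
  obtain ⟨φ, i, rfl⟩ := hw
  exact isSeparableElt_apply_of φ i

theorem IsSeparableElt.exists_isPrimitiveElt_mul {w : FreeGroup (Fin n)} (hw : IsSeparableElt w) :
    ∃ p q, IsPrimitiveElt p ∧ IsPrimitiveElt q ∧ p * q = w := by
  classical
  obtain ⟨F, ⟨K, -, hK, hbij⟩, hwF⟩ := hw
  let μ : FreeGroup (IsFreeGroup.Generators F) ∗ FreeGroup (IsFreeGroup.Generators K) ≃*
      FreeGroup (Fin n) :=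
    (MulEquiv.coprodCongr (IsFreeGroup.toFreeGroup F) (IsFreeGroup.toFreeGroup K)).symm.trans
      (MulEquiv.ofBijective _ hbij)
  obtain ⟨t⟩ : Nonempty (IsFreeGroup.Generators K) := by
    by_contra hT
    have : IsEmpty (IsFreeGroup.Generators K) := not_nonempty_iff.1 hT
    have : Subsingleton K := (IsFreeGroup.toFreeGroup K).toEquiv.subsingleton
    exact hK K.eq_bot_of_subsingleton
  set x := IsFreeGroup.toFreeGroup F ⟨w, hwF⟩
  have hx : μ (Coprod.inl x) = w := by simp [μ, x]
  refine ⟨μ (Coprod.inl x * Coprod.inr (of t)), (μ (Coprod.inr (of t)))⁻¹, ?_,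
    (isPrimitiveElt_apply_inr_of μ t).inv, by simp [hx]⟩
  simpa using isPrimitiveElt_apply_inr_of ((Coprod.transvection x t).trans μ) t

end PrimitiveSeparable

/-- The word metrics with respect to nontrivial separable elements and to
primitive elements are bi-Lipschitz: `d_sep ≤ d_prim ≤ 2 d_sep`. -/
theorem sep_prim_quasi_isometry (n : ℕ) (hn : 2 ≤ n) (g h : FreeGroup (Fin n)) :
    wordLen {w : FreeGroup (Fin n) | IsSeparableElt w ∧ w ≠ 1} (g⁻¹ * h) ≤
        wordLen {w : FreeGroup (Fin n) | IsPrimitiveElt w} (g⁻¹ * h) ∧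
      wordLen {w : FreeGroup (Fin n) | IsPrimitiveElt w} (g⁻¹ * h) ≤
        2 * wordLen {w : FreeGroup (Fin n) | IsSeparableElt w ∧ w ≠ 1} (g⁻¹ * h) := by
  have hprim_sep : {w : FreeGroup (Fin n) | IsPrimitiveElt w} ⊆ {w | IsSeparableElt w ∧ w ≠ 1} :=
    fun w hw => ⟨hw.isSeparableElt hn, hw.ne_one⟩
  have hprim (w : FreeGroup (Fin n)) : w ∈ Submonoid.closure {w | IsPrimitiveElt w} := by
    simp [closure_isPrimitiveElt_eq_top]
  refine ⟨wordLen_le_wordLen_of_subset hprim_sep (hprim _),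
    wordLen_le_mul_wordLen (fun s hs => ⟨hprim s, ?_⟩) (Submonoid.closure_mono hprim_sep (hprim _))⟩
  obtain ⟨p, q, hp, hq, rfl⟩ := hs.1.exists_isPrimitiveElt_mul
  simpa using wordLen_le_length (l := [p, q]) (by simp [hp, hq])
end
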